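/- Let G be an optimal allocation path from x to b. Then there exists an assignment map S : {1,…,ℓ} → {1,…,k} such that E_α(S) = M_α(G); moreover, G decomposes as the disjoint union G = G_1 ∪ … ∪ G_k of subgraphs with M_α(G) = Σ_{i=1}^k M_α(G_i), where for each i with S^{-1}(i) ≠ ∅, G_i is an optimal transport path from m(b_i)·δ_{x_i} to b_i (so that M_α(G_i) = d_α(m(b_i)·δ_{x_i}, b_i)), and G_i is empty if S^{-1}(i) = ∅. -/

import Mathlib

open scoped BigOperators RealInnerProductSpace

noncomputable section

attribute [local instance] Classical.propDecidable

/-- Points of the ambient Euclidean space `ℝ^m`. -/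
abbrev Pt (m : ℕ) := EuclideanSpace ℝ (Fin m)

/-- A weighted directed graph in `ℝ^m`: a finite vertex set, a finite set of
directed edges (ordered pairs of points, viewed as directed line segments), and
a weight function. -/
structure WDG (m : ℕ) where
  V : Finset (Pt m)
  E : Finset (Pt m × Pt m)
  w : Pt m × Pt m → ℝ

namespace WDG

variable {m : ℕ}

/-- Edges join distinct vertices of the graph and carry positive weight. -/
def edgesOK (G : WDG m) : Prop :=
  ∀ e ∈ G.E, e.1 ∈ G.V ∧ e.2 ∈ G.V ∧ e.1 ≠ e.2 ∧ 0 < G.w e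

/-- The underlying undirected (simple) graph. -/
def undirected (G : WDG m) : SimpleGraph (Pt m) :=
  SimpleGraph.fromRel (fun u v => (u, v) ∈ G.E)

/-- The cost `M_α(G) = Σ_{e ∈ E(G)} w(e)^α · length(e)`. -/
def cost (α : ℝ) (G : WDG m) : ℝ :=
  ∑ e ∈ G.E, (G.w e) ^ α * dist e.1 e.2

/-- Total weight of edges starting at `v`. -/
def outflow (G : WDG m) (v : Pt m) : ℝ :=
  ∑ e ∈ G.E.filter (fun e => e.1 = v), G.w e

/-- Total weight of edges ending at `v`. -/
def inflow (G : WDG m) (v : Pt m) : ℝ :=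
  ∑ e ∈ G.E.filter (fun e => e.2 = v), G.w e

end WDG

/-- Atomic measures are represented as finitely supported functions `ℝ^m →₀ ℝ`
with nonnegative values; `AtomicOn X c` also requires the atoms to lie in `X`. -/
def AtomicOn {m : ℕ} (X : Set (Pt m)) (c : Pt m →₀ ℝ) : Prop :=
  (∀ z, 0 ≤ c z) ∧ ↑c.support ⊆ X

/-- The mass `m(c)` of an atomic measure. -/
def massOf {m : ℕ} (c : Pt m →₀ ℝ) : ℝ := c.sum fun _ t => t

/-- `G` is a transport path from `a` to `b` inside `X`: its vertices lie in `X`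
and contain the atoms of `a` and `b`, its underlying undirected graph has no
cycles, and the balance equation holds at every vertex. -/
def IsTransportPath {m : ℕ} (X : Set (Pt m)) (G : WDG m) (a b : Pt m →₀ ℝ) : Prop :=
  G.edgesOK ∧ ↑G.V ⊆ X ∧
  (∀ z ∈ a.support, z ∈ G.V) ∧ (∀ z ∈ b.support, z ∈ G.V) ∧
  G.undirected.IsAcyclic ∧
  ∀ v : Pt m, G.outflow v - G.inflow v = a v - b v

/-- `d_α(a,b)`: the minimal cost of a transport path from `a` to `b`. -/
def dCost {m : ℕ} (X : Set (Pt m)) (α : ℝ) (a b : Pt m →₀ ℝ) : ℝ :=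
  sInf (WDG.cost α '' {G : WDG m | IsTransportPath X G a b})

/-- An optimal transport path from `a` to `b`. -/
def IsOptimalTP {m : ℕ} (X : Set (Pt m)) (α : ℝ) (G : WDG m) (a b : Pt m →₀ ℝ) : Prop :=
  IsTransportPath X G a b ∧
    ∀ G' : WDG m, IsTransportPath X G' a b → WDG.cost α G ≤ WDG.cost α G'

/-- The atomic probability measure `b = Σ_j n_j δ_{y_j}` of households. -/
def bMeas {m ℓ : ℕ} (y : Fin ℓ → Pt m) (n : Fin ℓ → ℝ) : Pt m →₀ ℝ :=
  ∑ j, Finsupp.single (y j) (n j)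

/-- An allocation path from the factory locations `x` to the households `(y,n)`:
a transport path to `b` from some atomic probability measure supported on the
factory locations. -/
def IsAllocPath {m k ℓ : ℕ} (X : Set (Pt m)) (x : Fin k → Pt m)
    (y : Fin ℓ → Pt m) (n : Fin ℓ → ℝ) (G : WDG m) : Prop :=
  ∃ a : Pt m →₀ ℝ, (∀ z, 0 ≤ a z) ∧ ↑a.support ⊆ Set.range x ∧ massOf a = 1 ∧
    IsTransportPath X G a (bMeas y n)

/-- An optimal allocation path: it minimizes `M_α` over all allocation paths. -/
def IsOptimalAllocPath {m k ℓ : ℕ} (X : Set (Pt m)) (α : ℝ) (x : Fin k → Pt m)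
    (y : Fin ℓ → Pt m) (n : Fin ℓ → ℝ) (G : WDG m) : Prop :=
  IsAllocPath X x y n G ∧
    ∀ G' : WDG m, IsAllocPath X x y n G' → WDG.cost α G ≤ WDG.cost α G'

/-- For an assignment map `S`, the part `b_i = Σ_{j : S(j) = i} n_j δ_{y_j}`. -/
def bPart {m k ℓ : ℕ} (y : Fin ℓ → Pt m) (n : Fin ℓ → ℝ) (S : Fin ℓ → Fin k)
    (i : Fin k) : Pt m →₀ ℝ :=
  ∑ j ∈ Finset.univ.filter (fun j => S j = i), Finsupp.single (y j) (n j)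

/-- The mass `m(b_i) = Σ_{j : S(j) = i} n_j`. -/
def mB {k ℓ : ℕ} (n : Fin ℓ → ℝ) (S : Fin ℓ → Fin k) (i : Fin k) : ℝ :=
  ∑ j ∈ Finset.univ.filter (fun j => S j = i), n j

/-- `E_α(S) = Σ_i d_α(m(b_i) δ_{x_i}, b_i)`. -/
def Ealpha {m k ℓ : ℕ} (X : Set (Pt m)) (α : ℝ) (x : Fin k → Pt m)
    (y : Fin ℓ → Pt m) (n : Fin ℓ → ℝ) (S : Fin ℓ → Fin k) : ℝ :=
  ∑ i, dCost X α (Finsupp.single (x i) (mB n S i)) (bPart y n S i)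

/-- An optimal assignment map minimizes `E_α` over all assignment maps. -/
def IsOptimalAssign {m k ℓ : ℕ} (X : Set (Pt m)) (α : ℝ) (x : Fin k → Pt m)
    (y : Fin ℓ → Pt m) (n : Fin ℓ → ℝ) (S : Fin ℓ → Fin k) : Prop :=
  ∀ S' : Fin ℓ → Fin k, Ealpha X α x y n S ≤ Ealpha X α x y n S'

/-- `ρ_α(σ,ε)`: equals `(σ/ε)^α − (σ/ε − 1)^α` for `σ > ε` (and for `σ = ε` when
`α ∈ (0,1)`), and equals `1` when `σ = ε` (covering also the convention for `α = 0`). -/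
def rho (α σ ε : ℝ) : ℝ :=
  if σ = ε then 1 else (σ / ε) ^ α - (σ / ε - 1) ^ α


/-- `G` is the disjoint union of the subgraphs `Gi`: the `Gi` have pairwise
disjoint vertex sets, each is a subgraph of `G` (with matching weights), and
the edges of `G` are exactly the (disjoint) union of their edges. -/
def IsDisjointUnion {m k : ℕ} (G : WDG m) (Gi : Fin k → WDG m) : Prop :=
  (∀ i i' : Fin k, i ≠ i' → Disjoint (Gi i).V (Gi i').V) ∧
  (∀ i, (Gi i).V ⊆ G.V) ∧
  (∀ i, (Gi i).E ⊆ G.E) ∧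
  (∀ i, ∀ e ∈ (Gi i).E, (Gi i).w e = G.w e) ∧
  G.E = Finset.univ.biUnion (fun i => (Gi i).E)

/-- The projection coordinate `π(z) = ⟨z − p, v⟩` along the line through `p`
in direction `v`. -/
def proj {m : ℕ} (p v z : Pt m) : ℝ := ⟪z - p, v⟫

/-- The constant `C = √(m−1)/(2^{1−(m−1)(1−α)} − 1) + 1`. -/
def Cconst (m : ℕ) (α : ℝ) : ℝ :=
  Real.sqrt ((m : ℝ) - 1) / ((2 : ℝ) ^ (1 - ((m : ℝ) - 1) * (1 - α)) - 1) + 1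



/-! An optimal allocation path `G` from its source measure `a` is in particular an optimal transport
path from `a`, and its restriction to a union of connected components is again optimal between the
restricted measures: otherwise splice in a cheaper path and remove the cycles this creates, which
concavity of `w ↦ w ^ α` allows at no extra cost. It therefore suffices that every component of `G`
contains exactly one factory of positive supply; then `S j` is the factory in the component of
`y j` and `G_i` is the component of `x i`. A component with an edge carries demand (else delete
it), hence some supply. It cannot carry two supplied factories: for `α > 0`, moving `±ε` of supply
between them along the connecting path lowers the mean cost by strict concavity. For `α = 0`,
start from a source, a supplied vertex without incoming edges (it exists because an optimal path
has no antiparallel edges, hence, being a forest, no directed cycles), and move its supply to the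
other factory until the lightest forward edge of the connecting path vanishes. -/

section Shift

variable {ι : Type*} {E : Finset ι} {w s d : ι → ℝ} {α : ℝ}

lemma concaveOn_sum_shift (hα0 : 0 ≤ α) (hα1 : α ≤ 1) (hd : ∀ e ∈ E, 0 ≤ d e) :
    ConcaveOn ℝ {t | ∀ e ∈ E, 0 ≤ w e + t * s e}
      (fun t => ∑ e ∈ E, (w e + t * s e) ^ α * d e) := by
  have hcomb : ∀ {μ ν : ℝ}, μ + ν = 1 → ∀ a b e,
      w e + (μ * a + ν * b) * s e = μ * (w e + a * s e) + ν * (w e + b * s e) :=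
    fun hμν a b e => by linear_combination (-w e) * hμν
  refine ⟨fun a ha b hb μ ν hμ hν hμν e he => ?_, fun a ha b hb μ ν hμ hν hμν => ?_⟩
  · rw [smul_eq_mul, smul_eq_mul, hcomb hμν]
    exact add_nonneg (mul_nonneg hμ (ha e he)) (mul_nonneg hν (hb e he))
  · simp only [smul_eq_mul, Finset.mul_sum, ← Finset.sum_add_distrib]
    refine Finset.sum_le_sum fun e he => ?_
    have hjensen := (Real.concaveOn_rpow hα0 hα1).2 (Set.mem_Ici.mpr (ha e he))
      (Set.mem_Ici.mpr (hb e he)) hμ hν hμν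
    simp only [smul_eq_mul] at hjensen
    rw [hcomb hμν]
    calc μ * ((w e + a * s e) ^ α * d e) + ν * ((w e + b * s e) ^ α * d e)
        = (μ * (w e + a * s e) ^ α + ν * (w e + b * s e) ^ α) * d e := by ring
      _ ≤ _ := mul_le_mul_of_nonneg_right hjensen (hd e he)

/-- One of the two extreme admissible shifts works, by concavity of the cost in `t`. -/
lemma exists_shift_kill_le (hα0 : 0 ≤ α) (hα1 : α ≤ 1) (hw : ∀ e ∈ E, 0 < w e)
    (hd : ∀ e ∈ E, 0 ≤ d e) (hs : ∀ e ∈ E, s e = 0 ∨ s e = 1 ∨ s e = -1)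
    (hne : ∃ e ∈ E, s e ≠ 0) :
    ∃ t, ∃ e₀ ∈ E, w e₀ + t * s e₀ = 0 ∧ (∀ e ∈ E, 0 ≤ w e + t * s e) ∧
      ∑ e ∈ E, (w e + t * s e) ^ α * d e ≤ ∑ e ∈ E, w e ^ α * d e := by
  wlog hplus : ∃ e ∈ E, s e = 1 generalizing s
  · obtain ⟨e, he, hse⟩ := hne
    have hminus : s e = -1 := by
      rcases hs e he with h | h | h
      exacts [absurd h hse, absurd ⟨e, he, h⟩ hplus, h]
    obtain ⟨t, e₀, he₀, hkill, hpos, hcost⟩ := this (s := fun e => -s e)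
      (fun e he => by rcases hs e he with h | h | h <;> simp [h]) ⟨e, he, by simp [hminus]⟩
      ⟨e, he, by simp [hminus]⟩
    exact ⟨-t, e₀, he₀, by simpa using hkill, fun e he => by simpa using hpos e he,
      by simpa using hcost⟩
  obtain ⟨ep, hep, hepmin⟩ := (E.filter (s · = 1)).exists_min_image w
    (let ⟨e, he, h⟩ := hplus; ⟨e, Finset.mem_filter.mpr ⟨he, h⟩⟩)
  obtain ⟨hepE, heps⟩ := Finset.mem_filter.mp hep
  have hfeas₁ : ∀ e ∈ E, 0 ≤ w e + -w ep * s e := fun e he => by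
    rcases hs e he with h | h | h <;> rw [h]
    · simpa using (hw e he).le
    · linarith [hepmin e (Finset.mem_filter.mpr ⟨he, h⟩)]
    · linarith [hw ep hepE, hw e he]
  have hkill₁ : w ep + -w ep * s ep = 0 := by rw [heps]; ring
  by_cases hminus : ∃ e ∈ E, s e = -1
  · obtain ⟨em, hem, hemmin⟩ := (E.filter (s · = -1)).exists_min_image w
      (let ⟨e, he, h⟩ := hminus; ⟨e, Finset.mem_filter.mpr ⟨he, h⟩⟩)
    obtain ⟨hemE, hems⟩ := Finset.mem_filter.mp hem
    have hfeas₂ : ∀ e ∈ E, 0 ≤ w e + w em * s e := fun e he => by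
      rcases hs e he with h | h | h <;> rw [h]
      · simpa using (hw e he).le
      · linarith [hw em hemE, hw e he]
      · linarith [hemmin e (Finset.mem_filter.mpr ⟨he, h⟩)]
    have hkill₂ : w em + w em * s em = 0 := by rw [hems]; ring
    have hmin := (concaveOn_sum_shift hα0 hα1 hd).min_le_of_mem_Icc hfeas₁ hfeas₂
      ⟨by linarith [hw ep hepE], (hw em hemE).le⟩
    simp only [zero_mul, add_zero] at hmin
    rcases min_le_iff.mp hmin with h | h
    exacts [⟨_, ep, hepE, hkill₁, hfeas₁, h⟩, ⟨_, em, hemE, hkill₂, hfeas₂, h⟩]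
  · refine ⟨_, ep, hepE, hkill₁, hfeas₁, Finset.sum_le_sum fun e he => ?_⟩
    refine mul_le_mul_of_nonneg_right (Real.rpow_le_rpow (hfeas₁ e he) ?_ hα0) (hd e he)
    rcases hs e he with h | h | h
    · simp [h]
    · rw [h]; linarith [hw ep hepE]
    · exact absurd ⟨e, he, h⟩ hminus

lemma sum_shift_add_sum_shift_neg_lt {t : ℝ}
    (hα0 : 0 < α) (hα1 : α < 1) (hpos : ∀ e ∈ E, 0 ≤ w e + t * s e)
    (hneg : ∀ e ∈ E, 0 ≤ w e + -t * s e) (hd : ∀ e ∈ E, 0 ≤ d e) {e₁ : ι} (he₁ : e₁ ∈ E)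
    (hs : t * s e₁ ≠ 0) (hd₁ : 0 < d e₁) :
    ∑ e ∈ E, (w e + t * s e) ^ α * d e + ∑ e ∈ E, (w e + -t * s e) ^ α * d e <
      2 * ∑ e ∈ E, w e ^ α * d e := by
  have hmid : ∀ e, (1 / 2 : ℝ) • (w e + t * s e) + (1 / 2 : ℝ) • (w e + -t * s e) = w e :=
    fun e => by simp only [smul_eq_mul]; ring
  have hhalf : (0 : ℝ) < 1 / 2 := by norm_num
  rw [← Finset.sum_add_distrib, Finset.mul_sum]
  refine Finset.sum_lt_sum (fun e he => ?_) ⟨e₁, he₁, ?_⟩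
  · have h := (Real.concaveOn_rpow hα0.le hα1.le).2 (Set.mem_Ici.mpr (hpos e he))
      (Set.mem_Ici.mpr (hneg e he)) hhalf.le hhalf.le (by norm_num)
    rw [hmid, smul_eq_mul, smul_eq_mul] at h
    nlinarith [hd e he]
  · have h := (Real.strictConcaveOn_rpow hα0 hα1).2 (Set.mem_Ici.mpr (hpos e₁ he₁))
      (Set.mem_Ici.mpr (hneg e₁ he₁)) (by contrapose! hs; linarith) hhalf hhalf (by norm_num)
    rw [hmid, smul_eq_mul, smul_eq_mul] at h
    nlinarith

end Shift

section Mass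

variable {m : ℕ}

lemma massOf_eq_sum {c : Pt m →₀ ℝ} {s : Finset (Pt m)} (h : c.support ⊆ s) :
    massOf c = ∑ z ∈ s, c z :=
  Finsupp.sum_of_support_subset c h _ fun _ _ => rfl

lemma le_massOf {c : Pt m →₀ ℝ} (hc : ∀ z, 0 ≤ c z) (z : Pt m) : c z ≤ massOf c := by
  rw [massOf_eq_sum subset_rfl]
  by_cases hz : z ∈ c.support
  · exact Finset.single_le_sum (fun z _ => hc z) hz
  · rw [Finsupp.notMem_support_iff.mp hz]
    exact Finset.sum_nonneg fun z _ => hc z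

lemma eq_zero_of_massOf_eq_zero {c : Pt m →₀ ℝ} (hc : ∀ z, 0 ≤ c z) (h : massOf c = 0) : c = 0 :=
  Finsupp.ext fun z => le_antisymm ((le_massOf hc z).trans h.le) (hc z)

lemma massOf_add (c d : Pt m →₀ ℝ) : massOf (c + d) = massOf c + massOf d :=
  Finsupp.sum_add_index' (fun _ => rfl) fun _ _ _ => rfl

lemma massOf_single (z : Pt m) (t : ℝ) : massOf (Finsupp.single z t) = t :=
  Finsupp.sum_single_index rfl

lemma massOf_sum_single {ι : Type*} (s : Finset ι) (y : ι → Pt m) (n : ι → ℝ) :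
    massOf (∑ j ∈ s, Finsupp.single (y j) (n j)) = ∑ j ∈ s, n j := by
  rw [massOf, ← Finsupp.sum_finsetSum_index (fun _ => rfl) fun _ _ _ => rfl]
  exact Finset.sum_congr rfl fun j _ => massOf_single _ _

end Mass

namespace WDG

variable {m : ℕ}

lemma cost_nonneg {α : ℝ} {G : WDG m} (hOK : G.edgesOK) : 0 ≤ G.cost α :=
  Finset.sum_nonneg fun e he => mul_nonneg (Real.rpow_nonneg (hOK e he).2.2.2.le _) dist_nonneg

lemma undirected_adj {G : WDG m} {u v : Pt m} :
    G.undirected.Adj u v ↔ u ≠ v ∧ ((u, v) ∈ G.E ∨ (v, u) ∈ G.E) :=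
  SimpleGraph.fromRel_adj _ _ _

lemma undirected_adj_of_mem {G : WDG m} (hOK : G.edgesOK) {e : Pt m × Pt m} (he : e ∈ G.E) :
    G.undirected.Adj e.1 e.2 :=
  undirected_adj.mpr ⟨(hOK e he).2.2.1, Or.inl he⟩

lemma undirected_mono {G H : WDG m} (h : G.E ⊆ H.E) : G.undirected ≤ H.undirected :=
  fun _ _ huv => undirected_adj.mpr
    ⟨(undirected_adj.mp huv).1, (undirected_adj.mp huv).2.imp (@h _) (@h _)⟩

lemma isAcyclic_undirected_of_E_eq_empty {G : WDG m} (hE : G.E = ∅) : G.undirected.IsAcyclic :=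
  SimpleGraph.isAcyclic_bot.anti fun _ _ huv => by simp [undirected_adj, hE] at huv

lemma w_le_outflow {G : WDG m} (hOK : G.edgesOK) {e : Pt m × Pt m} (he : e ∈ G.E) :
    G.w e ≤ G.outflow e.1 :=
  Finset.single_le_sum (fun f hf => (hOK f (Finset.mem_filter.mp hf).1).2.2.2.le)
    (Finset.mem_filter.mpr ⟨he, rfl⟩)

lemma w_le_inflow {G : WDG m} (hOK : G.edgesOK) {e : Pt m × Pt m} (he : e ∈ G.E) :
    G.w e ≤ G.inflow e.2 :=
  Finset.single_le_sum (fun f hf => (hOK f (Finset.mem_filter.mp hf).1).2.2.2.le)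
    (Finset.mem_filter.mpr ⟨he, rfl⟩)

def flux (G : WDG m) (f : Pt m × Pt m → ℝ) (v : Pt m) : ℝ :=
  ∑ e ∈ G.E.filter (fun e => e.1 = v), f e - ∑ e ∈ G.E.filter (fun e => e.2 = v), f e

lemma outflow_sub_inflow (G : WDG m) (v : Pt m) : G.outflow v - G.inflow v = G.flux G.w v := rfl

lemma flux_add (G : WDG m) (f g : Pt m × Pt m → ℝ) (v : Pt m) :
    G.flux (fun e => f e + g e) v = G.flux f v + G.flux g v := by
  simp only [flux, Finset.sum_add_distrib]; ring

lemma flux_add_mul (G : WDG m) (f g : Pt m × Pt m → ℝ) (t : ℝ) (v : Pt m) :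
    G.flux (fun e => f e + t * g e) v = G.flux f v + t * G.flux g v := by
  simp only [flux, Finset.sum_add_distrib, ← Finset.mul_sum]; ring

lemma flux_indicator (G : WDG m) {e₀ : Pt m × Pt m} (he₀ : e₀ ∈ G.E) (c : ℝ) (v : Pt m) :
    G.flux (fun e => if e = e₀ then c else 0) v =
      (if e₀.1 = v then c else 0) - (if e₀.2 = v then c else 0) := by
  simp [flux, Finset.sum_ite_eq', Finset.mem_filter, he₀]

lemma sum_outflow_sub_inflow {G : WDG m} (hOK : G.edgesOK) :
    ∑ v ∈ G.V, (G.outflow v - G.inflow v) = 0 := by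
  unfold outflow inflow
  rw [Finset.sum_sub_distrib, Finset.sum_fiberwise_of_maps_to (fun e he => (hOK e he).1),
    Finset.sum_fiberwise_of_maps_to (fun e he => (hOK e he).2.1), sub_self]

def perturb (G : WDG m) (s : Pt m × Pt m → ℝ) (t : ℝ) : WDG m :=
  ⟨G.V, G.E.filter (fun e => G.w e + t * s e ≠ 0), fun e => G.w e + t * s e⟩

section Perturb

variable {G : WDG m} {s : Pt m × Pt m → ℝ} {t : ℝ}

lemma perturb_E_subset : (G.perturb s t).E ⊆ G.E := Finset.filter_subset _ _

lemma perturb_outflow_sub_inflow (v : Pt m) :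
    (G.perturb s t).outflow v - (G.perturb s t).inflow v =
      G.outflow v - G.inflow v + t * G.flux s v := by
  have key : ∀ P : Pt m × Pt m → Prop, [DecidablePred P] →
      ∑ e ∈ (G.perturb s t).E.filter P, (G.perturb s t).w e =
        ∑ e ∈ G.E.filter P, (G.w e + t * s e) := fun P _ => by
    simp only [perturb, Finset.filter_comm _ P]
    exact Finset.sum_filter_ne_zero _
  rw [outflow_sub_inflow G, ← flux_add_mul]
  unfold outflow inflow
  rw [key, key]
  rfl

lemma edgesOK_perturb (hOK : G.edgesOK) (hpos : ∀ e ∈ G.E, 0 ≤ G.w e + t * s e) :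
    (G.perturb s t).edgesOK := by
  intro e he
  obtain ⟨he, hne⟩ := Finset.mem_filter.mp he
  exact ⟨(hOK e he).1, (hOK e he).2.1, (hOK e he).2.2.1, (hpos e he).lt_of_ne' hne⟩

lemma perturb_E_subset_erase {e₀ : Pt m × Pt m} (hkill : G.w e₀ + t * s e₀ = 0) :
    (G.perturb s t).E ⊆ G.E.erase e₀ := fun e he => by
  obtain ⟨he, hne⟩ := Finset.mem_filter.mp he
  exact Finset.mem_erase.mpr ⟨by rintro rfl; exact hne hkill, he⟩

lemma cost_perturb_le {α : ℝ} (hpos : ∀ e ∈ G.E, 0 ≤ G.w e + t * s e) :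
    (G.perturb s t).cost α ≤ ∑ e ∈ G.E, (G.w e + t * s e) ^ α * dist e.1 e.2 :=
  Finset.sum_le_sum_of_subset_of_nonneg perturb_E_subset fun e he _ =>
    mul_nonneg (Real.rpow_nonneg (hpos e he) _) dist_nonneg

lemma cost_zero_perturb_lt (hOK : G.edgesOK) {e₀ : Pt m × Pt m} (he₀ : e₀ ∈ G.E)
    (hkill : G.w e₀ + t * s e₀ = 0) : (G.perturb s t).cost 0 < G.cost 0 := by
  have hle : (G.perturb s t).cost 0 ≤ ∑ e ∈ G.E.erase e₀, dist e.1 e.2 := by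
    simpa [cost] using Finset.sum_le_sum_of_subset_of_nonneg (perturb_E_subset_erase hkill)
      (f := fun e => dist e.1 e.2) fun _ _ _ => dist_nonneg
  have hlen : 0 < dist e₀.1 e₀.2 := dist_pos.mpr (hOK e₀ he₀).2.2.1
  have hsplit := Finset.sum_erase_add G.E (fun e => dist e.1 e.2) he₀
  simp only [cost, Real.rpow_zero, one_mul] at hle ⊢
  linarith

end Perturb

/-- For antiparallel edges the one pointing from `a` to `b` is chosen. -/
def orientedStep (G : WDG m) (a b : Pt m) : (Pt m × Pt m) × ℝ :=
  if (a, b) ∈ G.E then ((a, b), 1) else ((b, a), -1)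

/-- The signed number of times a walk traverses each directed edge. -/
def walkSign (G : WDG m) : {u v : Pt m} → G.undirected.Walk u v → Pt m × Pt m → ℝ
  | _, _, .nil, _ => 0
  | _, _, .cons (v := c) (u := a) _ p, e =>
      (if e = (G.orientedStep a c).1 then (G.orientedStep a c).2 else 0) + G.walkSign p e

section WalkSign

variable {G : WDG m}

lemma orientedStep_mem {a b : Pt m} (h : G.undirected.Adj a b) : (G.orientedStep a b).1 ∈ G.E := by
  unfold orientedStep
  split_ifs with hab
  · exact hab
  · exact ((undirected_adj.mp h).2.resolve_left hab)

lemma orientedStep_sym2 (a b : Pt m) :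
    s((G.orientedStep a b).1.1, (G.orientedStep a b).1.2) = s(a, b) := by
  unfold orientedStep
  split_ifs <;> simp [Sym2.eq_swap]

lemma walkSign_cons {a c v : Pt m} (h : G.undirected.Adj a c) (p : G.undirected.Walk c v)
    (e : Pt m × Pt m) : G.walkSign (.cons h p) e =
      (if e = (G.orientedStep a c).1 then (G.orientedStep a c).2 else 0) + G.walkSign p e :=
  rfl

lemma mem_edges_of_walkSign_ne_zero {u v : Pt m} (p : G.undirected.Walk u v)
    {e : Pt m × Pt m} (he : G.walkSign p e ≠ 0) : s(e.1, e.2) ∈ p.edges := by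
  induction p with
  | nil => exact absurd rfl he
  | @cons a c _ h p ih =>
    rw [walkSign_cons] at he
    by_cases hc : e = (G.orientedStep a c).1
    · subst hc
      simp [orientedStep_sym2]
    · rw [if_neg hc, zero_add] at he
      exact List.mem_cons_of_mem _ (ih he)

lemma walkSign_cons_of_nodup {a c v : Pt m} (h : G.undirected.Adj a c)
    (p : G.undirected.Walk c v) (hnd : (SimpleGraph.Walk.cons h p).edges.Nodup) (e : Pt m × Pt m) :
    G.walkSign (.cons h p) e =
      if e = (G.orientedStep a c).1 then (G.orientedStep a c).2 else G.walkSign p e := by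
  rw [walkSign_cons]
  split_ifs with hc
  · subst hc
    by_contra hne
    rw [add_eq_left] at hne
    have := mem_edges_of_walkSign_ne_zero p hne
    rw [orientedStep_sym2] at this
    exact (List.nodup_cons.mp hnd).1 this
  · rw [zero_add]

lemma walkSign_trichotomy {u v : Pt m} (p : G.undirected.Walk u v) (hnd : p.edges.Nodup)
    (e : Pt m × Pt m) : G.walkSign p e = 0 ∨ G.walkSign p e = 1 ∨ G.walkSign p e = -1 := by
  induction p with
  | nil => exact Or.inl rfl
  | @cons a c _ h p ih =>
    rw [walkSign_cons_of_nodup h p hnd]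
    split_ifs
    · unfold orientedStep; split_ifs <;> simp
    · exact ih (List.nodup_cons.mp hnd).2

lemma exists_walkSign_ne_zero {u v : Pt m} (p : G.undirected.Walk u v) (hp : ¬ p.Nil)
    (hnd : p.edges.Nodup) : ∃ e ∈ G.E, G.walkSign p e ≠ 0 := by
  cases p with
  | nil => exact absurd SimpleGraph.Walk.Nil.nil hp
  | @cons _ c _ h p =>
    refine ⟨_, orientedStep_mem h, ?_⟩
    rw [walkSign_cons_of_nodup h p hnd, if_pos rfl]
    unfold orientedStep; split_ifs <;> norm_num

lemma flux_walkSign {u u' : Pt m} (p : G.undirected.Walk u u') (v : Pt m) :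
    G.flux (G.walkSign p) v = (if u = v then 1 else 0) - (if u' = v then 1 else 0) := by
  induction p with
  | nil => simp [flux, walkSign]
  | @cons a c _ h p ih =>
    have hstep : G.flux (fun e => if e = (G.orientedStep a c).1 then
        (G.orientedStep a c).2 else 0) v = (if a = v then 1 else 0) - (if c = v then 1 else 0) := by
      rw [flux_indicator _ (orientedStep_mem h)]
      unfold orientedStep
      split_ifs <;> simp_all
    rw [show G.walkSign (.cons h p) = _ from funext (walkSign_cons h p), flux_add, hstep, ih]
    ring

lemma exists_walkSign_eq_one_of_inflow_eq_zero (hOK : G.edgesOK) {z v : Pt m}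
    (W : G.undirected.Walk z v) (hnd : W.edges.Nodup) (hzv : z ≠ v) (hin : G.inflow z = 0) :
    ∃ e ∈ G.E, e.1 = z ∧ G.walkSign W e = 1 := by
  cases W with
  | nil => exact absurd rfl hzv
  | @cons _ d _ h P =>
    have hzd : (z, d) ∈ G.E := (undirected_adj.mp h).2.resolve_right fun hdz => by
      linarith [w_le_inflow hOK hdz, (hOK _ hdz).2.2.2]
    refine ⟨(z, d), hzd, rfl, ?_⟩
    rw [walkSign_cons_of_nodup h P hnd, orientedStep, if_pos hzd, if_pos rfl]

end WalkSign

/-- Acyclification: push flow around a cycle until one of its edges dies. -/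
theorem exists_isTransportPath_cost_le {X : Set (Pt m)} {α : ℝ} (hα0 : 0 ≤ α) (hα1 : α ≤ 1)
    {a b : Pt m →₀ ℝ} (H : WDG m) (hOK : H.edgesOK) (hVX : ↑H.V ⊆ X)
    (haV : ∀ z ∈ a.support, z ∈ H.V) (hbV : ∀ z ∈ b.support, z ∈ H.V)
    (hbal : ∀ v, H.outflow v - H.inflow v = a v - b v) :
    ∃ H', IsTransportPath X H' a b ∧ H'.cost α ≤ H.cost α := by
  induction hN : H.E.card using Nat.strong_induction_on generalizing H with
  | _ N ih =>
  by_cases hacyc : H.undirected.IsAcyclic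
  · exact ⟨H, ⟨hOK, hVX, haV, hbV, hacyc, hbal⟩, le_rfl⟩
  obtain ⟨v, c, hc⟩ : ∃ v, ∃ c : H.undirected.Walk v v, c.IsCycle := by
    simpa [SimpleGraph.IsAcyclic] using hacyc
  have hnd := hc.isCircuit.isTrail.edges_nodup
  obtain ⟨t, e₀, he₀, hkill, hpos, hcost⟩ := exists_shift_kill_le hα0 hα1
    (d := fun e => dist e.1 e.2) (fun e he => (hOK e he).2.2.2) (fun _ _ => dist_nonneg)
    (fun e _ => walkSign_trichotomy c hnd e) (exists_walkSign_ne_zero c hc.not_nil hnd)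
  have hlt : (H.perturb (H.walkSign c) t).E.card < N :=
    hN ▸ (Finset.card_le_card (perturb_E_subset_erase hkill)).trans_lt
      (Finset.card_erase_lt_of_mem he₀)
  obtain ⟨H', hH', hcost'⟩ := ih _ hlt _ (edgesOK_perturb hOK hpos) hVX haV hbV
    (fun v => by simp [perturb_outflow_sub_inflow, flux_walkSign, hbal]) rfl
  exact ⟨H', hH', hcost'.trans ((cost_perturb_le hpos).trans hcost)⟩

def restrict (G : WDG m) (p : Pt m → Prop) [DecidablePred p] : WDG m :=
  ⟨G.V.filter p, G.E.filter (fun e => p e.1), G.w⟩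

def union (G₁ G₂ : WDG m) : WDG m :=
  ⟨G₁.V ∪ G₂.V, G₁.E ∪ G₂.E,
    fun e => (if e ∈ G₁.E then G₁.w e else 0) + (if e ∈ G₂.E then G₂.w e else 0)⟩

lemma cost_pos_of_mem {α : ℝ} {G : WDG m} (hOK : G.edgesOK) {e : Pt m × Pt m} (he : e ∈ G.E) :
    0 < G.cost α :=
  Finset.sum_pos' (fun f hf => mul_nonneg (Real.rpow_nonneg (hOK f hf).2.2.2.le _) dist_nonneg)
    ⟨e, he, mul_pos (Real.rpow_pos_of_pos (hOK e he).2.2.2 _) (dist_pos.mpr (hOK e he).2.2.1)⟩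

section Restrict

variable {G : WDG m} {p : Pt m → Prop} [DecidablePred p]

lemma reachable_fst_iff (hOK : G.edgesOK) {e : Pt m × Pt m} (he : e ∈ G.E) (r : Pt m) :
    G.undirected.Reachable e.1 r ↔ G.undirected.Reachable e.2 r :=
  have h := (undirected_adj_of_mem hOK he).reachable
  ⟨h.symm.trans, h.trans⟩

lemma restrict_outflow (v : Pt m) :
    (G.restrict p).outflow v = if p v then G.outflow v else 0 := by
  simp only [outflow, restrict, Finset.filter_filter]
  split_ifs with hv
  · exact Finset.sum_congr (Finset.filter_congr fun e _ => ⟨And.right, fun h => ⟨h ▸ hv, h⟩⟩)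
      fun _ _ => rfl
  · exact Finset.sum_eq_zero fun e he => absurd (Finset.mem_filter.mp he).2 fun h => hv (h.2 ▸ h.1)

lemma restrict_inflow (hp : ∀ e ∈ G.E, (p e.1 ↔ p e.2)) (v : Pt m) :
    (G.restrict p).inflow v = if p v then G.inflow v else 0 := by
  simp only [inflow, restrict, Finset.filter_filter]
  split_ifs with hv
  · exact Finset.sum_congr (Finset.filter_congr fun e he =>
      ⟨And.right, fun h => ⟨(hp e he).mpr (h ▸ hv), h⟩⟩) fun _ _ => rfl
  · refine Finset.sum_eq_zero fun e he => absurd (Finset.mem_filter.mp he).2 fun h => hv ?_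
    exact h.2 ▸ (hp e (Finset.mem_filter.mp he).1).mp h.1

lemma edgesOK_restrict (hOK : G.edgesOK) (hp : ∀ e ∈ G.E, (p e.1 ↔ p e.2)) :
    (G.restrict p).edgesOK := fun e he => by
  obtain ⟨he, hpe⟩ := Finset.mem_filter.mp he
  exact ⟨Finset.mem_filter.mpr ⟨(hOK e he).1, hpe⟩,
    Finset.mem_filter.mpr ⟨(hOK e he).2.1, (hp e he).mp hpe⟩, (hOK e he).2.2⟩

lemma cost_restrict_add_cost_restrict_not (α : ℝ) :
    (G.restrict p).cost α + (G.restrict (¬ p ·)).cost α = G.cost α :=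
  Finset.sum_filter_add_sum_filter_not _ _ _

end Restrict

section Union

variable {G₁ G₂ : WDG m}

lemma sum_filter_union (P : Pt m × Pt m → Prop) [DecidablePred P] :
    ∑ e ∈ (G₁.union G₂).E.filter P, (G₁.union G₂).w e =
      ∑ e ∈ G₁.E.filter P, G₁.w e + ∑ e ∈ G₂.E.filter P, G₂.w e := by
  simp only [union, Finset.sum_add_distrib, Finset.sum_ite_mem]
  congr 2 <;> ext e <;> simp only [Finset.mem_inter, Finset.mem_filter, Finset.mem_union] <;> tauto

lemma union_outflow (v : Pt m) : (G₁.union G₂).outflow v = G₁.outflow v + G₂.outflow v :=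
  sum_filter_union _

lemma union_inflow (v : Pt m) : (G₁.union G₂).inflow v = G₁.inflow v + G₂.inflow v :=
  sum_filter_union _

lemma edgesOK_union (h₁ : G₁.edgesOK) (h₂ : G₂.edgesOK) : (G₁.union G₂).edgesOK := by
  intro e he
  have hw₁ : 0 ≤ if e ∈ G₁.E then G₁.w e else 0 := by
    split_ifs with h; exacts [(h₁ e h).2.2.2.le, le_rfl]
  have hw₂ : 0 ≤ if e ∈ G₂.E then G₂.w e else 0 := by
    split_ifs with h; exacts [(h₂ e h).2.2.2.le, le_rfl]
  rcases Finset.mem_union.mp he with h | h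
  · refine ⟨Finset.mem_union_left _ (h₁ e h).1, Finset.mem_union_left _ (h₁ e h).2.1,
      (h₁ e h).2.2.1, ?_⟩
    have := (h₁ e h).2.2.2
    simp only [union, if_pos h] at hw₁ ⊢
    linarith
  · refine ⟨Finset.mem_union_right _ (h₂ e h).1, Finset.mem_union_right _ (h₂ e h).2.1,
      (h₂ e h).2.2.1, ?_⟩
    have := (h₂ e h).2.2.2
    simp only [union, if_pos h] at hw₂ ⊢
    linarith

lemma cost_union_le {α : ℝ} (hα0 : 0 ≤ α) (hα1 : α ≤ 1) (h₁ : G₁.edgesOK) (h₂ : G₂.edgesOK) :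
    (G₁.union G₂).cost α ≤ G₁.cost α + G₂.cost α := by
  have key : ∀ e ∈ G₁.E ∪ G₂.E, (G₁.union G₂).w e ^ α * dist e.1 e.2 ≤
      (if e ∈ G₁.E then G₁.w e ^ α * dist e.1 e.2 else 0) +
        (if e ∈ G₂.E then G₂.w e ^ α * dist e.1 e.2 else 0) := by
    intro e he
    simp only [union]
    split_ifs with hm₁ hm₂ hm₂
    · rw [← add_mul]
      refine mul_le_mul_of_nonneg_right ?_ dist_nonneg
      have := NNReal.rpow_add_le_add_rpow ⟨_, (h₁ e hm₁).2.2.2.le⟩ ⟨_, (h₂ e hm₂).2.2.2.le⟩ hα0 hα1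
      exact_mod_cast this
    · simp
    · simp
    · simp_all
  calc (G₁.union G₂).cost α
      ≤ ∑ e ∈ G₁.E ∪ G₂.E, ((if e ∈ G₁.E then G₁.w e ^ α * dist e.1 e.2 else 0) +
          (if e ∈ G₂.E then G₂.w e ^ α * dist e.1 e.2 else 0)) := Finset.sum_le_sum key
    _ = G₁.cost α + G₂.cost α := by
      rw [Finset.sum_add_distrib, Finset.sum_ite_mem, Finset.sum_ite_mem,
        Finset.union_inter_cancel_left, Finset.union_inter_cancel_right]
      rfl

end Union

section Directed

variable {G : WDG m}

/-- In a forest, a path from `u'` back to a predecessor `u` of `u'` must be the edge `u' u`. -/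
lemma notMem_support_of_isPath_forward (hOK : G.edgesOK) (hacyc : G.undirected.IsAcyclic)
    (hanti : ∀ u v, (u, v) ∈ G.E → (v, u) ∉ G.E) {u u' v : Pt m} (huu' : (u, u') ∈ G.E)
    {P : G.undirected.Walk u' v} (hP : P.IsPath) (hfwd : ∀ d ∈ P.darts, (d.fst, d.snd) ∈ G.E) :
    u ∉ P.support := by
  intro hu
  have hadj : G.undirected.Adj u' u := (undirected_adj_of_mem hOK huu').symm
  have hQ : P.takeUntil u hu = hadj.toWalk := congrArg Subtype.val
    ((hacyc.subsingleton_path u' u).elim ⟨_, hP.takeUntil hu⟩ (SimpleGraph.Path.singleton hadj))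
  have hd : (⟨(u', u), hadj⟩ : G.undirected.Dart) ∈ P.darts :=
    P.darts_takeUntil_subset_darts hu (by simp [hQ])
  exact hanti u u' huu' (hfwd _ hd)

lemma exists_isPath_forward (hOK : G.edgesOK) (hacyc : G.undirected.IsAcyclic)
    (hanti : ∀ u v, (u, v) ∈ G.E → (v, u) ∉ G.E) {u v : Pt m}
    (h : Relation.ReflTransGen (fun u v => (u, v) ∈ G.E) u v) :
    ∃ P : G.undirected.Walk u v, P.IsPath ∧ ∀ d ∈ P.darts, (d.fst, d.snd) ∈ G.E := by
  induction h using Relation.ReflTransGen.head_induction_on with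
  | refl => exact ⟨.nil, .nil, by simp⟩
  | head huu' _ ih =>
    obtain ⟨P, hP, hfwd⟩ := ih
    refine ⟨.cons (undirected_adj_of_mem hOK huu') P, (SimpleGraph.Walk.cons_isPath_iff _ _).mpr
      ⟨hP, notMem_support_of_isPath_forward hOK hacyc hanti huu' hP hfwd⟩, fun d hd => ?_⟩
    rw [SimpleGraph.Walk.darts_cons, List.mem_cons] at hd
    rcases hd with rfl | hd
    exacts [huu', hfwd d hd]

lemma not_transGen_self (hOK : G.edgesOK) (hacyc : G.undirected.IsAcyclic)
    (hanti : ∀ u v, (u, v) ∈ G.E → (v, u) ∉ G.E) (c : Pt m) :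
    ¬ Relation.TransGen (fun u v => (u, v) ∈ G.E) c c := fun h => by
  obtain ⟨d, hcd, hdc⟩ := Relation.TransGen.head'_iff.mp h
  obtain ⟨P, hP, hfwd⟩ := exists_isPath_forward hOK hacyc hanti hdc
  exact notMem_support_of_isPath_forward hOK hacyc hanti hcd hP hfwd P.end_mem_support

/-- A minimal element of the (finite, strictly ordered) set of ancestors of `p` is a source. -/
theorem exists_source_reachable (hOK : G.edgesOK) (hacyc : G.undirected.IsAcyclic)
    (hanti : ∀ u v, (u, v) ∈ G.E → (v, u) ∉ G.E) {a b : Pt m →₀ ℝ}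
    (hbal : ∀ v, G.outflow v - G.inflow v = a v - b v) (hb : ∀ v, 0 ≤ b v) {p : Pt m}
    (hp : 0 < a p) : ∃ z, 0 < a z ∧ G.inflow z = 0 ∧ G.undirected.Reachable z p := by
  set r : Pt m → Pt m → Prop := fun u v => (u, v) ∈ G.E
  have hU : {u | Relation.ReflTransGen r u p}.Finite :=
    (G.V.finite_toSet.insert p).subset fun u hu => by
      rcases Relation.ReflTransGen.cases_head hu with rfl | ⟨w, huw, -⟩
      exacts [Set.mem_insert _ _, Set.mem_insert_of_mem _ (hOK _ huw).1]
  have : IsStrictOrder (Pt m) (Relation.TransGen r) :=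
    { irrefl := not_transGen_self hOK hacyc hanti, trans := fun _ _ _ => .trans }
  obtain ⟨⟨z, hzp⟩, -, hmin⟩ := (hU.wellFoundedOn (r := Relation.TransGen r)).has_min Set.univ
    ⟨⟨p, .refl⟩, trivial⟩
  have hin : G.inflow z = 0 := Finset.sum_eq_zero fun e he => by
    obtain ⟨heE, rfl⟩ := Finset.mem_filter.mp he
    exact absurd (.single heE) (hmin ⟨e.1, .head heE hzp⟩ trivial)
  refine ⟨z, ?_, hin, ?_⟩
  · rcases Relation.ReflTransGen.cases_head hzp with rfl | ⟨w, hzw, -⟩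
    · exact hp
    · linarith [w_le_outflow hOK hzw, (hOK _ hzw).2.2.2, hbal z, hb z]
  · obtain ⟨P, -, -⟩ := exists_isPath_forward hOK hacyc hanti hzp
    exact ⟨P⟩

end Directed

end WDG

open WDG

section TransportPath

variable {m : ℕ} {X : Set (Pt m)} {α : ℝ} {G : WDG m} {a b : Pt m →₀ ℝ}

lemma IsTransportPath.massOf_eq (hTP : IsTransportPath X G a b) : massOf a = massOf b := by
  obtain ⟨hOK, -, haV, hbV, -, hbal⟩ := hTP
  have h := sum_outflow_sub_inflow hOK
  rw [Finset.sum_congr rfl fun v _ => hbal v, Finset.sum_sub_distrib, sub_eq_zero] at h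
  rwa [massOf_eq_sum fun z hz => haV z hz, massOf_eq_sum fun z hz => hbV z hz]

lemma IsTransportPath.restrict (hTP : IsTransportPath X G a b) {p : Pt m → Prop}
    [DecidablePred p] (hp : ∀ e ∈ G.E, (p e.1 ↔ p e.2)) :
    IsTransportPath X (G.restrict p) (a.filter p) (b.filter p) := by
  obtain ⟨hOK, hVX, haV, hbV, hacyc, hbal⟩ := hTP
  refine ⟨edgesOK_restrict hOK hp, fun v hv => hVX (Finset.mem_filter.mp hv).1, ?_, ?_,
    hacyc.anti (undirected_mono (Finset.filter_subset _ _)), fun v => ?_⟩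
  · intro z hz
    rw [Finsupp.support_filter, Finset.mem_filter] at hz
    exact Finset.mem_filter.mpr ⟨haV z hz.1, hz.2⟩
  · intro z hz
    rw [Finsupp.support_filter, Finset.mem_filter] at hz
    exact Finset.mem_filter.mpr ⟨hbV z hz.1, hz.2⟩
  · rw [restrict_outflow, restrict_inflow hp, Finsupp.filter_apply, Finsupp.filter_apply]
    split_ifs
    exacts [hbal v, rfl]

lemma IsOptimalTP.cost_eq_dCost (hG : IsOptimalTP X α G a b) : G.cost α = dCost X α a b := by
  unfold dCost
  symm
  refine IsLeast.csInf_eq ⟨⟨G, hG.1, rfl⟩, ?_⟩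
  rintro _ ⟨G', hG', rfl⟩
  exact hG.2 G' hG'

lemma isOptimalTP_empty (w : Pt m × Pt m → ℝ) : IsOptimalTP X α ⟨∅, ∅, w⟩ 0 0 :=
  ⟨⟨fun e he => absurd he (Finset.notMem_empty e), by simp, by simp, by simp,
      isAcyclic_undirected_of_E_eq_empty rfl, fun v => by simp [outflow, inflow]⟩,
    fun G' hG' => by simpa [cost] using cost_nonneg (α := α) hG'.1⟩

theorem IsOptimalTP.restrict (hα0 : 0 ≤ α) (hα1 : α ≤ 1) (hG : IsOptimalTP X α G a b)
    {p : Pt m → Prop} [DecidablePred p] (hp : ∀ e ∈ G.E, (p e.1 ↔ p e.2)) :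
    IsOptimalTP X α (G.restrict p) (a.filter p) (b.filter p) := by
  obtain ⟨hTP, hopt⟩ := hG
  refine ⟨hTP.restrict hp, fun G' hG' => ?_⟩
  obtain ⟨hOK', hVX', haV', hbV', -, hbal'⟩ := hG'
  obtain ⟨hOKr, hVXr, haVr, hbVr, -, hbalr⟩ :=
    hTP.restrict (p := (¬ p ·)) fun e he => not_congr (hp e he)
  set H₀ := (G.restrict (¬ p ·)).union G'
  have hsupp : ∀ c : Pt m →₀ ℝ, (∀ z ∈ (c.filter p).support, z ∈ G'.V) →
      (∀ z ∈ (c.filter (¬ p ·)).support, z ∈ (G.restrict (¬ p ·)).V) →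
      ∀ z ∈ c.support, z ∈ H₀.V := fun c h₁ h₂ z hz => by
    by_cases hpz : p z
    · exact Finset.mem_union_right _
        (h₁ z (by rw [Finsupp.support_filter]; exact Finset.mem_filter.mpr ⟨hz, hpz⟩))
    · exact Finset.mem_union_left _
        (h₂ z (by rw [Finsupp.support_filter]; exact Finset.mem_filter.mpr ⟨hz, hpz⟩))
  have hVX₀ : ↑H₀.V ⊆ X := by
    simp only [H₀, union, Finset.coe_union]
    exact Set.union_subset hVXr hVX'
  have hbal₀ : ∀ v, H₀.outflow v - H₀.inflow v = a v - b v := fun v => by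
    have h₁ := hbalr v
    have h₂ := hbal' v
    rw [union_outflow, union_inflow]
    by_cases hv : p v <;> simp [hv] at h₁ h₂ <;> linarith
  obtain ⟨H, hH, hcostH⟩ := exists_isTransportPath_cost_le hα0 hα1 H₀ (edgesOK_union hOKr hOK') hVX₀
    (hsupp a haV' haVr) (hsupp b hbV' hbVr) hbal₀
  linarith [hopt H hH, cost_union_le hα0 hα1 hOKr hOK', cost_restrict_add_cost_restrict_not
    (G := G) (p := p) α]

theorem IsOptimalTP.exists_reachable_target (hG : IsOptimalTP X α G a b) (ha : ∀ z, 0 ≤ a z)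
    {e : Pt m × Pt m} (he : e ∈ G.E) : ∃ v, b v ≠ 0 ∧ G.undirected.Reachable e.1 v := by
  by_contra! hb
  obtain ⟨hTP, hopt⟩ := hG
  set p : Pt m → Prop := fun v => G.undirected.Reachable v e.1
  have hp : ∀ f ∈ G.E, (p f.1 ↔ p f.2) := fun f hf => reachable_fst_iff hTP.1 hf e.1
  have hbp : b.filter p = 0 := Finsupp.ext fun v => by
    by_contra hv
    rw [Finsupp.filter_apply] at hv
    split_ifs at hv with hpv
    exacts [hb v hv hpv.symm, hv rfl]
  have hap : a.filter p = 0 := eq_zero_of_massOf_eq_zero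
    (fun z => by rw [Finsupp.filter_apply]; split_ifs; exacts [ha z, le_rfl])
    (by rw [(hTP.restrict hp).massOf_eq, hbp]; rfl)
  have hnot : ∀ c : Pt m →₀ ℝ, c.filter p = 0 → c.filter (¬ p ·) = c := fun c hc => by
    conv_rhs => rw [← c.filter_add_filter_not p, hc, zero_add]
  have hTP' := hTP.restrict (p := (¬ p ·)) fun f hf => not_congr (hp f hf)
  rw [hnot a hap, hnot b hbp] at hTP'
  have hpos : 0 < (G.restrict p).cost α := cost_pos_of_mem (edgesOK_restrict hTP.1 hp)
    (Finset.mem_filter.mpr ⟨he, SimpleGraph.Reachable.refl _⟩)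
  linarith [hopt _ hTP', cost_restrict_add_cost_restrict_not (G := G) (p := p) α]

end TransportPath

section Households

variable {m k ℓ : ℕ} {y : Fin ℓ → Pt m} {n : Fin ℓ → ℝ}

lemma bMeas_apply (v : Pt m) : bMeas y n v = ∑ j, if y j = v then n j else 0 := by
  simp [bMeas, Finsupp.finsetSum_apply, Finsupp.single_apply]

lemma bMeas_nonneg (hn : ∀ j, 0 ≤ n j) (v : Pt m) : 0 ≤ bMeas y n v := by
  rw [bMeas_apply]
  exact Finset.sum_nonneg fun j _ => by split_ifs; exacts [hn j, le_rfl]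

lemma bMeas_apply_of_injective (hy : Function.Injective y) (j : Fin ℓ) : bMeas y n (y j) = n j := by
  rw [bMeas_apply, Finset.sum_eq_single j (fun j' _ hj' => if_neg (hy.ne hj')) (by simp),
    if_pos rfl]

lemma exists_eq_of_bMeas_ne_zero {v : Pt m} (h : bMeas y n v ≠ 0) : ∃ j, y j = v := by
  by_contra! hv
  exact h (by simp [bMeas_apply, hv])

lemma bPart_apply (S : Fin ℓ → Fin k) (i : Fin k) (v : Pt m) :
    bPart y n S i v = ∑ j, if S j = i ∧ y j = v then n j else 0 := by
  rw [bPart, Finsupp.finsetSum_apply, Finset.sum_filter]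
  simp only [Finsupp.single_apply, ite_and]

end Households

section Perturbation

variable {m k ℓ : ℕ} {X : Set (Pt m)} {G : WDG m} {a b : Pt m →₀ ℝ}

/-- Moving the smaller of two antiparallel weights off both edges removes an edge. -/
theorem IsOptimalTP.swap_notMem (hG : IsOptimalTP X 0 G a b) {u v : Pt m} (huv : (u, v) ∈ G.E) :
    (v, u) ∉ G.E := by
  intro hvu
  wlog hle : G.w (v, u) ≤ G.w (u, v) generalizing u v
  · exact this hvu huv (le_of_not_ge hle)
  obtain ⟨⟨hOK, hVX, haV, hbV, hacyc, hbal⟩, hopt⟩ := hG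
  have hne : (v, u) ≠ (u, v) := fun h => (hOK _ huv).2.2.1 (Prod.ext_iff.mp h).2
  let s : Pt m × Pt m → ℝ := fun e => (if e = (u, v) then 1 else 0) + (if e = (v, u) then 1 else 0)
  have hflux : ∀ z, G.flux s z = 0 := fun z => by
    rw [flux_add, flux_indicator _ huv, flux_indicator _ hvu]
    ring
  have hpos : ∀ e ∈ G.E, 0 ≤ G.w e + -G.w (v, u) * s e := fun e he => by
    by_cases h₁ : e = (u, v)
    · simp [s, h₁, hne.symm, hle]
    · by_cases h₂ : e = (v, u)
      · simp [s, h₂, hne]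
      · simpa [s, h₁, h₂] using (hOK e he).2.2.2.le
  have hkill : G.w (v, u) + -G.w (v, u) * s (v, u) = 0 := by simp [s, hne]
  have hTP' : IsTransportPath X (G.perturb s (-G.w (v, u))) a b :=
    ⟨edgesOK_perturb hOK hpos, hVX, haV, hbV, hacyc.anti (undirected_mono perturb_E_subset),
      fun z => by rw [perturb_outflow_sub_inflow, hflux, mul_zero, add_zero, hbal]⟩
  exact (cost_zero_perturb_lt hOK hvu hkill).not_ge (hopt _ hTP')

theorem IsTransportPath.perturb_walkSign (hTP : IsTransportPath X G a b) {p q : Pt m}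
    (hp : p ∈ G.V) (hq : q ∈ G.V) (W : G.undirected.Walk p q) {t : ℝ}
    (hpos : ∀ e ∈ G.E, 0 ≤ G.w e + t * G.walkSign W e) :
    IsTransportPath X (G.perturb (G.walkSign W) t)
      (a + Finsupp.single p t + Finsupp.single q (-t)) b := by
  obtain ⟨hOK, hVX, haV, hbV, hacyc, hbal⟩ := hTP
  refine ⟨edgesOK_perturb hOK hpos, hVX, fun z hz => ?_, hbV,
    hacyc.anti (undirected_mono perturb_E_subset), fun v => ?_⟩
  · by_contra hzV
    have hza : a z = 0 := Finsupp.notMem_support_iff.mp fun h => hzV (haV z h)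
    have hpz : p ≠ z := fun h => hzV (h ▸ hp)
    have hqz : q ≠ z := fun h => hzV (h ▸ hq)
    exact Finsupp.mem_support_iff.mp hz (by simp [hza, hpz, hqz])
  · rw [perturb_outflow_sub_inflow, flux_walkSign, hbal]
    simp only [Finsupp.add_apply, Finsupp.single_apply]
    split_ifs <;> ring

theorem IsTransportPath.isAllocPath_perturb_walkSign {x : Fin k → Pt m} {y : Fin ℓ → Pt m}
    {n : Fin ℓ → ℝ} (hTP : IsTransportPath X G a (bMeas y n)) (ha : ∀ z, 0 ≤ a z)
    (haX : ↑a.support ⊆ Set.range x) (hmass : massOf a = 1) {p q : Pt m} (hpq : p ≠ q)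
    (hp : 0 < a p) (hq : 0 < a q) (W : G.undirected.Walk p q) {t : ℝ}
    (hpos : ∀ e ∈ G.E, 0 ≤ G.w e + t * G.walkSign W e) (htp : -a p ≤ t) (htq : t ≤ a q) :
    IsAllocPath X x y n (G.perturb (G.walkSign W) t) := by
  have hmem : ∀ {z}, 0 < a z → z ∈ a.support := fun hz => Finsupp.mem_support_iff.mpr hz.ne'
  refine ⟨_, fun z => ?_, fun z hz => ?_, ?_, hTP.perturb_walkSign (hTP.2.2.1 _ (hmem hp))
    (hTP.2.2.1 _ (hmem hq)) W hpos⟩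
  · simp only [Finsupp.add_apply, Finsupp.single_apply]
    split_ifs with h₁ h₂ <;> subst_vars <;> first | exact absurd rfl hpq | linarith [ha z]
  · by_cases hzp : z = p
    · exact hzp ▸ haX (hmem hp)
    by_cases hzq : z = q
    · exact hzq ▸ haX (hmem hq)
    refine haX (Finsupp.mem_support_iff.mpr fun hza => Finsupp.mem_support_iff.mp hz ?_)
    simp [hza, Ne.symm hzp, Ne.symm hzq]
  · rw [massOf_add, massOf_add, massOf_single, massOf_single, hmass]
    ring

end Perturbation

section TwoSources

variable {m k ℓ : ℕ} {X : Set (Pt m)} {α : ℝ} {x : Fin k → Pt m} {y : Fin ℓ → Pt m}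
  {n : Fin ℓ → ℝ} {G : WDG m} {a : Pt m →₀ ℝ}

lemma not_reachable_of_inflow_eq_zero (hTP : IsTransportPath X G a (bMeas y n))
    (ha : ∀ z, 0 ≤ a z) (haX : ↑a.support ⊆ Set.range x) (hmass : massOf a = 1)
    (hopt : ∀ G', IsAllocPath X x y n G' → G.cost 0 ≤ G'.cost 0) (hn : ∀ j, 0 ≤ n j)
    {z q : Pt m} (hz : 0 < a z) (hin : G.inflow z = 0) (hq : 0 < a q) (hzq : z ≠ q) :
    ¬ G.undirected.Reachable z q := fun hreach => by
  have hOK := hTP.1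
  obtain ⟨W, hW⟩ := hreach.some.toPath
  have hnd := hW.isTrail.edges_nodup
  obtain ⟨e₁, he₁, rfl, hs₁⟩ := exists_walkSign_eq_one_of_inflow_eq_zero hOK W hnd hzq hin
  obtain ⟨e₀, he₀, hmin⟩ := (G.E.filter (G.walkSign W · = 1)).exists_min_image G.w
    ⟨e₁, Finset.mem_filter.mpr ⟨he₁, hs₁⟩⟩
  obtain ⟨he₀E, hs₀⟩ := Finset.mem_filter.mp he₀
  have hpos : ∀ e ∈ G.E, 0 ≤ G.w e + -G.w e₀ * G.walkSign W e := fun e he => by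
    rcases walkSign_trichotomy W hnd e with h | h | h <;> rw [h]
    · simpa using (hOK e he).2.2.2.le
    · linarith [hmin e (Finset.mem_filter.mpr ⟨he, h⟩)]
    · linarith [(hOK e he).2.2.2, (hOK e₀ he₀E).2.2.2]
  have hw₀ : G.w e₀ ≤ a e₁.1 := by
    linarith [hmin e₁ (Finset.mem_filter.mpr ⟨he₁, hs₁⟩), w_le_outflow hOK he₁,
      hTP.2.2.2.2.2 e₁.1, bMeas_nonneg (y := y) hn e₁.1]
  have halloc := hTP.isAllocPath_perturb_walkSign ha haX hmass hzq hz hq W hpos (by linarith)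
    (by linarith [(hOK e₀ he₀E).2.2.2])
  exact (cost_zero_perturb_lt hOK he₀E (by rw [hs₀]; ring)).not_ge (hopt _ halloc)

lemma not_reachable_of_exponent_pos (hα0 : 0 < α) (hα1 : α < 1)
    (hTP : IsTransportPath X G a (bMeas y n)) (ha : ∀ z, 0 ≤ a z)
    (haX : ↑a.support ⊆ Set.range x) (hmass : massOf a = 1)
    (hopt : ∀ G', IsAllocPath X x y n G' → G.cost α ≤ G'.cost α)
    {p q : Pt m} (hp : 0 < a p) (hq : 0 < a q) (hpq : p ≠ q) :
    ¬ G.undirected.Reachable p q := fun hreach => by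
  have hOK := hTP.1
  obtain ⟨W, hW⟩ := hreach.some.toPath
  have hnd := hW.isTrail.edges_nodup
  obtain ⟨e₁, he₁, hs₁⟩ := exists_walkSign_ne_zero W (SimpleGraph.Walk.not_nil_of_ne hpq) hnd
  obtain ⟨em, hem, hmin⟩ := G.E.exists_min_image G.w ⟨e₁, he₁⟩
  set ε := min (min (a p) (a q)) (G.w em)
  have hε : 0 < ε := lt_min (lt_min hp hq) (hOK em hem).2.2.2
  have hεw : ∀ e ∈ G.E, ε ≤ G.w e := fun e he => (min_le_right _ _).trans (hmin e he)
  have hεp : ε ≤ a p := (min_le_left _ _).trans (min_le_left _ _)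
  have hεq : ε ≤ a q := (min_le_left _ _).trans (min_le_right _ _)
  have hfeas : ∀ t, |t| ≤ ε → ∀ e ∈ G.E, 0 ≤ G.w e + t * G.walkSign W e := fun t ht e he => by
    have := abs_le.mp ht
    rcases walkSign_trichotomy W hnd e with h | h | h <;> rw [h] <;>
      linarith [hεw e he, (hOK e he).2.2.2]
  have hfeas_pos := hfeas ε (abs_of_pos hε).le
  have hfeas_neg := hfeas (-ε) (abs_neg ε ▸ (abs_of_pos hε).le)
  have hplus := hTP.isAllocPath_perturb_walkSign ha haX hmass hpq hp hq W hfeas_pos (by linarith)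
    hεq
  have hminus := hTP.isAllocPath_perturb_walkSign ha haX hmass hpq hp hq W hfeas_neg (by linarith)
    (by linarith)
  have hlt := sum_shift_add_sum_shift_neg_lt hα0 hα1 hfeas_pos hfeas_neg (fun _ _ => dist_nonneg)
    he₁ (mul_ne_zero hε.ne' hs₁) (dist_pos.mpr (hOK e₁ he₁).2.2.1)
  have hcost : G.cost α = ∑ e ∈ G.E, G.w e ^ α * dist e.1 e.2 := rfl
  linarith [hopt _ hplus, hopt _ hminus, cost_perturb_le (α := α) hfeas_pos,
    cost_perturb_le (α := α) hfeas_neg]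

theorem eq_of_reachable_of_pos (hα0 : 0 ≤ α) (hα1 : α < 1)
    (hTP : IsTransportPath X G a (bMeas y n)) (ha : ∀ z, 0 ≤ a z)
    (haX : ↑a.support ⊆ Set.range x) (hmass : massOf a = 1)
    (hopt : ∀ G', IsAllocPath X x y n G' → G.cost α ≤ G'.cost α) (hn : ∀ j, 0 ≤ n j)
    {p q : Pt m} (hp : 0 < a p) (hq : 0 < a q) (hreach : G.undirected.Reachable p q) : p = q := by
  by_contra hpq
  rcases hα0.eq_or_lt with rfl | hα
  · have hanti : ∀ u v, (u, v) ∈ G.E → (v, u) ∉ G.E := fun _ _ =>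
      IsOptimalTP.swap_notMem ⟨hTP, fun G' hG' => hopt G' ⟨a, ha, haX, hmass, hG'⟩⟩
    obtain ⟨z, hz, hin, hzp⟩ := exists_source_reachable hTP.1 hTP.2.2.2.2.1 hanti
      hTP.2.2.2.2.2 (bMeas_nonneg hn) hp
    by_cases hzp' : z = p
    · exact not_reachable_of_inflow_eq_zero hTP ha haX hmass hopt hn hz hin hq (hzp' ▸ hpq)
        (hzp.trans hreach)
    · exact not_reachable_of_inflow_eq_zero hTP ha haX hmass hopt hn hz hin hp hzp' hzp
  · exact not_reachable_of_exponent_pos hα hα1 hTP ha haX hmass hopt hp hq hpq hreach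

end TwoSources

section Decomposition

variable {m k ℓ : ℕ} {X : Set (Pt m)} {G : WDG m} {a b : Pt m →₀ ℝ}

lemma IsTransportPath.exists_pos_reachable (hTP : IsTransportPath X G a b) (ha : ∀ z, 0 ≤ a z)
    (hb : ∀ z, 0 ≤ b z) {v : Pt m} (hv : 0 < b v) : ∃ p, 0 < a p ∧ G.undirected.Reachable v p := by
  set P : Pt m → Prop := (G.undirected.Reachable · v)
  have hmass := (hTP.restrict (p := P) fun e he => reachable_fst_iff hTP.1 he v).massOf_eq
  have hbv : b v ≤ massOf (b.filter P) := by
    have := le_massOf (c := b.filter P) (fun z => by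
      rw [Finsupp.filter_apply]; split_ifs; exacts [hb z, le_rfl]) v
    rwa [Finsupp.filter_apply, if_pos (SimpleGraph.Reachable.refl v)] at this
  obtain ⟨p, hp⟩ : ∃ p, a.filter P p ≠ 0 := by
    by_contra! h
    have h0 : a.filter P = 0 := Finsupp.ext h
    rw [h0, show massOf (0 : Pt m →₀ ℝ) = 0 from Finsupp.sum_zero_index] at hmass
    linarith
  rw [Finsupp.filter_apply] at hp
  split_ifs at hp with hpv
  · exact ⟨p, (ha p).lt_of_ne (Ne.symm hp), hpv.symm⟩
  · exact absurd rfl hp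

lemma IsTransportPath.filter_reachable_eq_single (hTP : IsTransportPath X G a b)
    (ha : ∀ z, 0 ≤ a z)
    (hunique : ∀ p q, 0 < a p → 0 < a q → G.undirected.Reachable p q → p = q)
    {p : Pt m} (hp : 0 < a p) :
    a.filter (G.undirected.Reachable · p) =
      Finsupp.single p (massOf (b.filter (G.undirected.Reachable · p))) := by
  have hsingle : a.filter (G.undirected.Reachable · p) = Finsupp.single p (a p) :=
    Finsupp.ext fun v => by
      rw [Finsupp.filter_apply, Finsupp.single_apply]
      by_cases hvp : p = v
      · subst hvp
        simp
      · rw [if_neg hvp]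
        split_ifs with hreach
        · by_contra hav
          exact hvp (hunique v p ((ha v).lt_of_ne (Ne.symm hav)) hp hreach).symm
        · rfl
  rw [← (hTP.restrict (p := (G.undirected.Reachable · p))
    fun e he => reachable_fst_iff hTP.1 he p).massOf_eq, hsingle, massOf_single]

lemma bMeas_filter_eq_bPart {y : Fin ℓ → Pt m} {n : Fin ℓ → ℝ} {S : Fin ℓ → Fin k} {i : Fin k}
    {P : Pt m → Prop} [DecidablePred P] (hS : ∀ j, P (y j) ↔ S j = i) :
    (bMeas y n).filter P = bPart y n S i := Finsupp.ext fun v => by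
  rw [Finsupp.filter_apply, bMeas_apply, bPart_apply]
  split_ifs with hv
  · refine Finset.sum_congr rfl fun j _ => ?_
    by_cases hjv : y j = v
    · simp [hjv, (hS j).mp (hjv ▸ hv)]
    · simp [hjv]
  · refine (Finset.sum_eq_zero fun j _ => if_neg fun (h : S j = i ∧ y j = v) => hv ?_).symm
    exact h.2 ▸ (hS j).mpr h.1

lemma massOf_bPart (y : Fin ℓ → Pt m) (n : Fin ℓ → ℝ) (S : Fin ℓ → Fin k) (i : Fin k) :
    massOf (bPart y n S i) = mB n S i :=
  massOf_sum_single _ _ _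

theorem isDisjointUnion_components (r : Fin k → Pt m) (act : Fin k → Prop)
    [DecidablePred act]
    (hr : ∀ i i', act i → act i' → G.undirected.Reachable (r i) (r i') → i = i')
    (hcover : ∀ e ∈ G.E, ∃ i, act i ∧ G.undirected.Reachable e.1 (r i)) :
    IsDisjointUnion G fun i =>
      if act i then G.restrict (G.undirected.Reachable · (r i)) else ⟨∅, ∅, G.w⟩ := by
  unfold IsDisjointUnion
  dsimp only
  refine ⟨fun i i' hii' => ?_, fun i => ?_, fun i => ?_, fun i e _ => by split_ifs <;> rfl, ?_⟩
  · split_ifs with hi hi'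
    · refine Finset.disjoint_left.mpr fun v hv hv' => hii' (hr i i' hi hi' ?_)
      exact ((Finset.mem_filter.mp hv).2.symm.trans (Finset.mem_filter.mp hv').2)
    all_goals simp
  · split_ifs
    exacts [Finset.filter_subset _ _, Finset.empty_subset _]
  · split_ifs
    exacts [Finset.filter_subset _ _, Finset.empty_subset _]
  · ext e
    refine ⟨fun he => ?_, fun he => ?_⟩
    · obtain ⟨i, hi, hre⟩ := hcover e he
      exact Finset.mem_biUnion.mpr ⟨i, Finset.mem_univ _, by
        simpa [hi, restrict] using And.intro he hre⟩
    · obtain ⟨i, -, hei⟩ := Finset.mem_biUnion.mp he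
      split_ifs at hei
      exacts [(Finset.mem_filter.mp hei).1, absurd hei (Finset.notMem_empty e)]

theorem IsDisjointUnion.cost_eq_sum {Gi : Fin k → WDG m} (h : IsDisjointUnion G Gi)
    (hOK : ∀ i, (Gi i).edgesOK) (α : ℝ) : G.cost α = ∑ i, (Gi i).cost α := by
  obtain ⟨hV, -, -, hw, hE⟩ := h
  have hdisj : Set.PairwiseDisjoint ↑(Finset.univ : Finset (Fin k)) (fun i => (Gi i).E) :=
    fun i _ i' _ hii' => Finset.disjoint_left.mpr fun e he he' =>
      Finset.disjoint_left.mp (hV i i' hii') (hOK i e he).1 (hOK i' e he').1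
  rw [cost, hE, Finset.sum_biUnion hdisj]
  exact Finset.sum_congr rfl fun i _ => Finset.sum_congr rfl fun e he => by rw [hw i e he]

lemma exists_assignment {x : Fin k → Pt m} {y : Fin ℓ → Pt m} {n : Fin ℓ → ℝ}
    (hTP : IsTransportPath X G a (bMeas y n)) (ha : ∀ z, 0 ≤ a z)
    (haX : ↑a.support ⊆ Set.range x) (hyinj : Function.Injective y) (hn : ∀ j, 0 < n j) :
    ∃ S : Fin ℓ → Fin k, ∀ j, 0 < a (x (S j)) ∧ G.undirected.Reachable (y j) (x (S j)) := by
  have h : ∀ j, ∃ i, 0 < a (x i) ∧ G.undirected.Reachable (y j) (x i) := fun j => by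
    obtain ⟨p, hp, hreach⟩ := hTP.exists_pos_reachable ha (bMeas_nonneg fun j => (hn j).le)
      (by rw [bMeas_apply_of_injective hyinj]; exact hn j)
    obtain ⟨i, rfl⟩ := haX (Finsupp.mem_support_iff.mpr hp.ne')
    exact ⟨i, hp, hreach⟩
  choose S hS using h
  exact ⟨S, hS⟩

theorem IsOptimalTP.component_assigned {α : ℝ} (hα0 : 0 ≤ α) (hα1 : α ≤ 1)
    {x : Fin k → Pt m} {y : Fin ℓ → Pt m} {n : Fin ℓ → ℝ} {S : Fin ℓ → Fin k} {i : Fin k}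
    (hG : IsOptimalTP X α G a (bMeas y n)) (ha : ∀ z, 0 ≤ a z)
    (hunique : ∀ p q, 0 < a p → 0 < a q → G.undirected.Reachable p q → p = q)
    (hi : 0 < a (x i)) (hserved : ∀ j, G.undirected.Reachable (y j) (x i) ↔ S j = i) :
    IsOptimalTP X α (G.restrict (G.undirected.Reachable · (x i)))
      (Finsupp.single (x i) (mB n S i)) (bPart y n S i) := by
  simpa [hG.1.filter_reachable_eq_single ha hunique hi,
    bMeas_filter_eq_bPart (P := (G.undirected.Reachable · (x i))) hserved, massOf_bPart]
    using hG.restrict (p := (G.undirected.Reachable · (x i))) hα0 hα1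
      fun e he => reachable_fst_iff hG.1.1 he (x i)

lemma Ealpha_eq_sum_cost {α : ℝ} {x : Fin k → Pt m} {y : Fin ℓ → Pt m} {n : Fin ℓ → ℝ}
    {S : Fin ℓ → Fin k} {Gi : Fin k → WDG m}
    (hopt : ∀ i, (∃ j, S j = i) →
      IsOptimalTP X α (Gi i) (Finsupp.single (x i) (mB n S i)) (bPart y n S i))
    (hempty : ∀ i, (¬ ∃ j, S j = i) → (Gi i).E = ∅) :
    Ealpha X α x y n S = ∑ i, (Gi i).cost α := by
  refine Finset.sum_congr rfl fun i _ => ?_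
  by_cases hi : ∃ j, S j = i
  · exact (hopt i hi).cost_eq_dCost.symm
  · have hfilter : Finset.univ.filter (S · = i) = ∅ :=
      Finset.filter_eq_empty_iff.mpr fun j _ h => hi ⟨j, h⟩
    rw [mB, bPart, hfilter, Finset.sum_empty, Finset.sum_empty, Finsupp.single_zero,
      ← (isOptimalTP_empty (Gi i).w).cost_eq_dCost, cost, cost, hempty i hi]

end Decomposition

theorem stmt_6_general {m k ℓ : ℕ} (X : Set (Pt m))
    (α : ℝ) (hα0 : 0 ≤ α) (hα1 : α < 1)
    (x : Fin k → Pt m) (hxinj : Function.Injective x)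
    (y : Fin ℓ → Pt m) (hyinj : Function.Injective y)
    (n : Fin ℓ → ℝ) (hn : ∀ j, 0 < n j)
    (G : WDG m) (hG : IsOptimalAllocPath X α x y n G) :
    ∃ S : Fin ℓ → Fin k,
      Ealpha X α x y n S = WDG.cost α G ∧
      ∃ Gi : Fin k → WDG m, IsDisjointUnion G Gi ∧
        WDG.cost α G = ∑ i, WDG.cost α (Gi i) ∧
        ∀ i : Fin k,
          ((∃ j, S j = i) →
            IsOptimalTP X α (Gi i) (Finsupp.single (x i) (mB n S i)) (bPart y n S i) ∧
            WDG.cost α (Gi i) =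
              dCost X α (Finsupp.single (x i) (mB n S i)) (bPart y n S i)) ∧
          ((¬ ∃ j, S j = i) → (Gi i).V = ∅ ∧ (Gi i).E = ∅) := by
  obtain ⟨⟨a, ha, haX, hmass, hTP⟩, hopt⟩ := hG
  have hoptTP : IsOptimalTP X α G a (bMeas y n) :=
    ⟨hTP, fun G' hG' => hopt G' ⟨a, ha, haX, hmass, hG'⟩⟩
  have hunique : ∀ p q, 0 < a p → 0 < a q → G.undirected.Reachable p q → p = q := fun _ _ =>
    eq_of_reachable_of_pos hα0 hα1 hTP ha haX hmass hopt fun j => (hn j).le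
  obtain ⟨S, hS⟩ := exists_assignment hTP ha haX hyinj hn
  have hact : ∀ i, (∃ j, S j = i) → 0 < a (x i) := by rintro i ⟨j, rfl⟩; exact (hS j).1
  have hserved : ∀ i, (∃ j, S j = i) → ∀ j, G.undirected.Reachable (y j) (x i) ↔ S j = i :=
    fun i hi j => ⟨fun h => hxinj (hunique _ _ (hS j).1 (hact i hi) ((hS j).2.symm.trans h)),
      fun h => h ▸ (hS j).2⟩
  set Gi : Fin k → WDG m := fun i => if ∃ j, S j = i then
    G.restrict (G.undirected.Reachable · (x i)) else ⟨∅, ∅, G.w⟩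
  have hGi : ∀ i, (∃ j, S j = i) →
      IsOptimalTP X α (Gi i) (Finsupp.single (x i) (mB n S i)) (bPart y n S i) := fun i hi => by
    simpa [Gi, hi] using hoptTP.component_assigned hα0 hα1.le ha hunique (hact i hi) (hserved i hi)
  have hunion : IsDisjointUnion G Gi := isDisjointUnion_components x _
    (fun i i' hi hi' h => hxinj (hunique _ _ (hact i hi) (hact i' hi') h)) fun e he => by
      obtain ⟨v, hv, hreach⟩ := hoptTP.exists_reachable_target ha he
      obtain ⟨j, rfl⟩ := exists_eq_of_bMeas_ne_zero hv
      exact ⟨S j, ⟨j, rfl⟩, hreach.trans (hS j).2⟩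
  have hcost := hunion.cost_eq_sum (fun i => if hi : ∃ j, S j = i then (hGi i hi).1.1 else by
    simp [Gi, hi, edgesOK]) α
  refine ⟨S, (Ealpha_eq_sum_cost hGi fun i hi => by simp [Gi, hi]).trans hcost.symm, Gi, hunion,
    hcost, fun i => ⟨fun hi => ⟨hGi i hi, (hGi i hi).cost_eq_dCost⟩, fun hi => by simp [Gi, hi]⟩⟩

/-- An optimal allocation path `G` admits an assignment map `S`
with `E_α(S) = M_α(G)`, and `G` decomposes as a disjoint union of subgraphs
`G_i`, with `M_α(G) = Σ_i M_α(G_i)`, each `G_i` (for nonempty `S⁻¹(i)`) being an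
optimal transport path from `m(b_i) δ_(x_i)` to `b_i` of cost `d_α(m(b_i) δ_(x_i), b_i)`,
and `G_i` empty when `S⁻¹(i) = ∅`. -/
theorem stmt_6 {m k ℓ : ℕ} (X : Set (Pt m)) (hXc : IsCompact X) (hXconv : Convex ℝ X)
    (α : ℝ) (hα0 : 0 ≤ α) (hα1 : α < 1)
    (x : Fin k → Pt m) (hxinj : Function.Injective x) (hxX : ∀ i, x i ∈ X)
    (y : Fin ℓ → Pt m) (hyinj : Function.Injective y) (hyX : ∀ j, y j ∈ X)
    (n : Fin ℓ → ℝ) (hn : ∀ j, 0 < n j) (hnsum : ∑ j, n j = 1)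
    (G : WDG m) (hG : IsOptimalAllocPath X α x y n G) :
    ∃ S : Fin ℓ → Fin k,
      Ealpha X α x y n S = WDG.cost α G ∧
      ∃ Gi : Fin k → WDG m, IsDisjointUnion G Gi ∧
        WDG.cost α G = ∑ i, WDG.cost α (Gi i) ∧
        ∀ i : Fin k,
          ((∃ j, S j = i) →
            IsOptimalTP X α (Gi i) (Finsupp.single (x i) (mB n S i)) (bPart y n S i) ∧
            WDG.cost α (Gi i) =
              dCost X α (Finsupp.single (x i) (mB n S i)) (bPart y n S i)) ∧
          ((¬ ∃ j, S j = i) → (Gi i).V = ∅ ∧ (Gi i).E = ∅) :=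
  stmt_6_general X α hα0 hα1 x hxinj y hyinj n hn G hG
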